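/- arXiv:1103.3867 — 2 statements merged into one kernel-verified Lean document; each statement's English description precedes it below -/
import Mathlib

section
/- Let η : closure(B(0,R)) → ℝ be a C² function satisfying −ε²Δη + tη ≤ 0 in B(0,R) and η ≤ 1 on ∂B(0,R), where ε, t, R > 0. Let γ = (−ε + √(ε² + tR²))/(2R²ε). Then η(x) ≤ e^{γ(|x|² − R²)} for all x ∈ B(0,R); in particular η(0) ≤ exp(−(−ε + √(ε² + tR²))/(2ε)) ≤ C e^{−√t R/(4ε)} for some absolute constant C when ε ≤ R. -/
open Metric

/-- Laplacian of a real function on `ℂ ≅ ℝ²`, via iterated directional derivatives. -/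
noncomputable def lapR (η : ℂ → ℝ) (x : ℂ) : ℝ :=
  fderiv ℝ (fun y => fderiv ℝ η y 1) x 1
    + fderiv ℝ (fun y => fderiv ℝ η y Complex.I) x Complex.I

open Filter Topology

/-!
The barrier `w(x) = exp (γ (‖x‖² - R²))` equals `1` on the sphere, and the choice of `γ` makes
`4 ε² γ (1 + γ R²) = t`, so `-ε² Δw + t w = (t - 4 ε² γ (1 + γ ‖x‖²)) w ≥ 0` in the ball.
Hence `η - w` is a subsolution of `-ε² Δ + t` that is `≤ 0` on the sphere. At an interior
maximum the Laplacian is `≤ 0` (each second directional derivative is, by the one-variable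
second derivative test), so `t (η - w) ≤ ε² Δ(η - w) ≤ 0` there, and `η ≤ w` on the closed ball.
Evaluating at `0` gives the two bounds on `η 0`, the last one because `√t R ≤ √(ε² + t R²)`.
-/

theorem IsLocalMax.deriv_deriv_nonpos {f : ℝ → ℝ} {a : ℝ} (hmax : IsLocalMax f a)
    (hf : ContinuousAt f a) : deriv (deriv f) a ≤ 0 := by
  by_contra! hpos
  -- A positive second derivative makes `a` also a local minimum, so `f` is locally constant.
  have hmin : IsLocalMin f a := isLocalMin_of_deriv_deriv_pos hpos hmax.deriv_eq_zero hf
  have hconst : f =ᶠ[𝓝 a] fun _ => f a :=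
    (hmax.and hmin).mono fun _ hx => le_antisymm hx.1 hx.2
  have hderiv : deriv f =ᶠ[𝓝 a] fun _ => 0 :=
    hconst.eventuallyEq_nhds.mono fun _ hy => hy.deriv_eq.trans (deriv_const _ _)
  simp [hderiv.deriv_eq] at hpos

section SecondDirectionalDerivative

variable {E : Type*} [NormedAddCommGroup E] [NormedSpace ℝ E]

theorem ContDiffAt.differentiableAt_fderiv_apply {g : E → ℝ} {x : E} (hg : ContDiffAt ℝ 2 g x)
    (d : E) : DifferentiableAt ℝ (fun y => fderiv ℝ g y d) x :=
  ((hg.fderiv_right (m := 1) (by norm_num)).differentiableAt (by norm_num)).clm_apply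
    (differentiableAt_const d)

theorem IsLocalMax.fderiv_fderiv_apply_nonpos {g : E → ℝ} {x : E} (hmax : IsLocalMax g x)
    (hg : ContDiffAt ℝ 2 g x) (d : E) :
    fderiv ℝ (fun y => fderiv ℝ g y d) x d ≤ 0 := by
  have hline : ∀ s : ℝ, HasDerivAt (fun s : ℝ => x + s • d) d s := fun s => by
    simpa using ((hasDerivAt_id s).smul_const d).const_add x
  have hdiff : ∀ᶠ s in 𝓝 (0 : ℝ), DifferentiableAt ℝ g (x + s • d) := by
    have hcont : Tendsto (fun s : ℝ => x + s • d) (𝓝 0) (𝓝 x) := by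
      simpa using (hline 0).continuousAt.tendsto
    exact hcont.eventually ((hg.eventually (by norm_num)).mono fun _ hy =>
      hy.differentiableAt (by norm_num))
  have hderiv : deriv (fun s : ℝ => g (x + s • d)) =ᶠ[𝓝 0]
      fun s => fderiv ℝ g (x + s • d) d :=
    hdiff.mono fun s hs => (hs.hasFDerivAt.comp_hasDerivAt s (hline s)).deriv
  have hsecond : deriv (deriv fun s : ℝ => g (x + s • d)) 0
      = fderiv ℝ (fun y => fderiv ℝ g y d) x d := by
    rw [hderiv.deriv_eq]
    exact ((hg.differentiableAt_fderiv_apply d).hasFDerivAt.comp_hasDerivAt_of_eq 0 (hline 0)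
      (by simp)).deriv
  rw [← hsecond]
  refine IsLocalMax.deriv_deriv_nonpos ?_ ?_
  · exact IsLocalMax.comp_continuous (g := fun s : ℝ => x + s • d) (b := 0) (by simpa using hmax)
      (hline 0).continuousAt
  · exact hg.continuousAt.comp_of_eq (hline 0).continuousAt (by simp)

theorem fderiv_fderiv_apply_sub {f g : E → ℝ} {x : E} (hf : ContDiffAt ℝ 2 f x)
    (hg : ContDiffAt ℝ 2 g x) (d : E) :
    fderiv ℝ (fun y => fderiv ℝ (f - g) y d) x d
      = fderiv ℝ (fun y => fderiv ℝ f y d) x d - fderiv ℝ (fun y => fderiv ℝ g y d) x d := by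
  have hfg : (fun y => fderiv ℝ (f - g) y d) =ᶠ[𝓝 x]
      fun y => fderiv ℝ f y d - fderiv ℝ g y d := by
    filter_upwards [hf.eventually (by norm_num), hg.eventually (by norm_num)] with y hfy hgy
    rw [fderiv_sub (hfy.differentiableAt (by norm_num)) (hgy.differentiableAt (by norm_num))]
    rfl
  rw [hfg.fderiv_eq, fderiv_fun_sub (hf.differentiableAt_fderiv_apply d)
    (hg.differentiableAt_fderiv_apply d)]
  rfl

end SecondDirectionalDerivative

theorem lapR_sub {f g : ℂ → ℝ} {x : ℂ} (hf : ContDiffAt ℝ 2 f x) (hg : ContDiffAt ℝ 2 g x) :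
    lapR (f - g) x = lapR f x - lapR g x := by
  simp only [lapR, fderiv_fderiv_apply_sub hf hg]
  ring

theorem IsLocalMax.lapR_nonpos {u : ℂ → ℝ} {x : ℂ} (hmax : IsLocalMax u x)
    (hu : ContDiffAt ℝ 2 u x) : lapR u x ≤ 0 :=
  add_nonpos (hmax.fderiv_fderiv_apply_nonpos hu 1) (hmax.fderiv_fderiv_apply_nonpos hu Complex.I)

theorem nonpos_of_subsolution {u : ℂ → ℝ} {c : ℂ} {a t R : ℝ} (ha : 0 ≤ a) (ht : 0 < t)
    (hu : ContDiffOn ℝ 2 u (closedBall c R))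
    (hsub : ∀ x ∈ ball c R, -a * lapR u x + t * u x ≤ 0)
    (hbdry : ∀ x ∈ sphere c R, u x ≤ 0) :
    ∀ x ∈ closedBall c R, u x ≤ 0 := by
  intro y hy
  obtain ⟨x₀, hx₀, hmax⟩ := (isCompact_closedBall c R).exists_isMaxOn ⟨y, hy⟩ hu.continuousOn
  refine (hmax hy).trans ?_
  rcases (mem_closedBall.1 hx₀).eq_or_lt with hsphere | hinterior
  · exact hbdry x₀ hsphere
  · have hnhds : closedBall c R ∈ 𝓝 x₀ := closedBall_mem_nhds_of_mem hinterior
    have hlap : lapR u x₀ ≤ 0 := (hmax.isLocalMax hnhds).lapR_nonpos (hu.contDiffAt hnhds)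
    nlinarith [hsub x₀ hinterior, mul_nonneg ha (neg_nonneg.2 hlap)]

theorem le_of_subsolution_of_supersolution {u w : ℂ → ℝ} {c : ℂ} {a t R : ℝ} (ha : 0 ≤ a)
    (ht : 0 < t) (hu : ContDiffOn ℝ 2 u (closedBall c R))
    (hw : ContDiffOn ℝ 2 w (closedBall c R))
    (hsub : ∀ x ∈ ball c R, -a * lapR u x + t * u x ≤ -a * lapR w x + t * w x)
    (hbdry : ∀ x ∈ sphere c R, u x ≤ w x) :
    ∀ x ∈ closedBall c R, u x ≤ w x := by
  refine fun x hx => sub_nonpos.1 (nonpos_of_subsolution ha ht (hu.sub hw) (fun y hy => ?_)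
    (fun y hy => sub_nonpos.2 (hbdry y hy)) x hx)
  have hnhds : closedBall c R ∈ 𝓝 y := closedBall_mem_nhds_of_mem hy
  change -a * lapR (u - w) y + t * (u y - w y) ≤ 0
  rw [lapR_sub (hu.contDiffAt hnhds) (hw.contDiffAt hnhds)]
  linarith [hsub y hy]

section Barrier

variable {E : Type*} [NormedAddCommGroup E]

noncomputable def barrier (γ R : ℝ) (x : E) : ℝ := Real.exp (γ * (‖x‖ ^ 2 - R ^ 2))

theorem barrier_of_norm_eq {γ R : ℝ} {x : E} (hx : ‖x‖ = R) : barrier γ R x = 1 := by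
  simp [barrier, hx]

variable [InnerProductSpace ℝ E]

theorem contDiff_barrier (γ R : ℝ) : ContDiff ℝ 2 (barrier (E := E) γ R) :=
  (contDiff_const.mul ((contDiff_norm_sq ℝ).sub contDiff_const)).exp

theorem hasFDerivAt_barrier (γ R : ℝ) (y : E) :
    HasFDerivAt (barrier γ R) ((barrier γ R y * (2 * γ)) • innerSL ℝ y) y := by
  have := ((((hasStrictFDerivAt_norm_sq y).hasFDerivAt).sub_const (R ^ 2)).const_mul γ).exp
  refine this.congr_fderiv (ContinuousLinearMap.ext fun d => ?_)
  simp [barrier]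
  ring

theorem fderiv_barrier_apply (γ R : ℝ) (d : E) :
    (fun y => fderiv ℝ (barrier γ R) y d) = fun y => barrier γ R y * (2 * γ * inner ℝ y d) := by
  funext y
  rw [(hasFDerivAt_barrier γ R y).fderiv]
  simp
  ring

theorem fderiv_fderiv_barrier_apply (γ R : ℝ) (x d : E) :
    fderiv ℝ (fun y => fderiv ℝ (barrier γ R) y d) x d
      = (4 * γ ^ 2 * inner ℝ x d ^ 2 + 2 * γ * ‖d‖ ^ 2) * barrier γ R x := by
  have hinner : HasFDerivAt (fun y : E => 2 * γ * inner ℝ y d) ((2 * γ) • innerSL ℝ d) x := by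
    simpa [real_inner_comm] using (innerSL ℝ d).hasFDerivAt.const_mul (2 * γ)
  rw [fderiv_barrier_apply, ((hasFDerivAt_barrier γ R x).fun_mul hinner).fderiv]
  simp only [add_apply, smul_apply, innerSL_apply_apply, smul_eq_mul, real_inner_self_eq_norm_sq]
  ring

end Barrier

theorem lapR_barrier (γ R : ℝ) (x : ℂ) :
    lapR (barrier γ R) x = 4 * γ * (1 + γ * ‖x‖ ^ 2) * barrier γ R x := by
  rw [lapR, fderiv_fderiv_barrier_apply, fderiv_fderiv_barrier_apply]
  simp [Complex.inner, Complex.sq_norm, Complex.normSq_apply]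
  ring

theorem mul_lapR_barrier_le {a t γ R : ℝ} {x : ℂ} (ha : 0 ≤ a) (hγ : 0 ≤ γ) (hx : ‖x‖ ≤ R)
    (hγt : 4 * a * γ * (1 + γ * R ^ 2) ≤ t) :
    a * lapR (barrier γ R) x ≤ t * barrier γ R x := by
  have hxR : ‖x‖ ^ 2 ≤ R ^ 2 := pow_le_pow_left₀ (norm_nonneg x) hx 2
  have hw : 0 ≤ barrier γ R x := (Real.exp_pos _).le
  calc a * lapR (barrier γ R) x = 4 * a * γ * (1 + γ * ‖x‖ ^ 2) * barrier γ R x := by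
        rw [lapR_barrier]; ring
    _ ≤ 4 * a * γ * (1 + γ * R ^ 2) * barrier γ R x := by gcongr
    _ ≤ t * barrier γ R x := by gcongr

-- The positive root `γ` of `4 ε² R² γ² + 4 ε² γ = t`.
noncomputable def decayRate (ε t R : ℝ) : ℝ :=
  (-ε + Real.sqrt (ε ^ 2 + t * R ^ 2)) / (2 * R ^ 2 * ε)

theorem le_sqrt_sq_add_mul_sq {ε t R : ℝ} (ht : 0 ≤ t) :
    ε ≤ Real.sqrt (ε ^ 2 + t * R ^ 2) :=
  Real.le_sqrt_of_sq_le (by nlinarith [mul_nonneg ht (sq_nonneg R)])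

theorem decayRate_nonneg {ε t R : ℝ} (hε : 0 < ε) (ht : 0 ≤ t) : 0 ≤ decayRate ε t R :=
  div_nonneg (by linarith [le_sqrt_sq_add_mul_sq (ε := ε) (R := R) ht]) (by positivity)

theorem four_mul_sq_mul_decayRate {ε t R : ℝ} (hε : 0 < ε) (ht : 0 ≤ t) (hR : R ≠ 0) :
    4 * ε ^ 2 * decayRate ε t R * (1 + decayRate ε t R * R ^ 2) = t := by
  have hS := Real.sq_sqrt (by positivity : 0 ≤ ε ^ 2 + t * R ^ 2)
  unfold decayRate
  field_simp
  linear_combination 4 * hS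

theorem decayRate_mul_sq {ε t R : ℝ} (hR : R ≠ 0) :
    decayRate ε t R * R ^ 2 = (-ε + Real.sqrt (ε ^ 2 + t * R ^ 2)) / (2 * ε) := by
  unfold decayRate
  field_simp

theorem sqrt_mul_le_sqrt_sq_add_mul_sq {ε t R : ℝ} (hR : 0 ≤ R) :
    Real.sqrt t * R ≤ Real.sqrt (ε ^ 2 + t * R ^ 2) :=
  calc Real.sqrt t * R = Real.sqrt (t * R ^ 2) := by
        rw [Real.sqrt_mul' t (sq_nonneg R), Real.sqrt_sq hR]
    _ ≤ Real.sqrt (ε ^ 2 + t * R ^ 2) := Real.sqrt_le_sqrt (by nlinarith [sq_nonneg ε])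

theorem exp_neg_div_le_exp_half_mul {ε t R : ℝ} (hε : 0 < ε) (hR : 0 ≤ R) :
    Real.exp (-((-ε + Real.sqrt (ε ^ 2 + t * R ^ 2)) / (2 * ε)))
      ≤ Real.exp (1 / 2) * Real.exp (-(Real.sqrt t * R) / (4 * ε)) := by
  rw [← Real.exp_add, Real.exp_le_exp, ← sub_nonneg]
  have hgap : 1 / 2 + -(Real.sqrt t * R) / (4 * ε)
      - -((-ε + Real.sqrt (ε ^ 2 + t * R ^ 2)) / (2 * ε))
      = (2 * Real.sqrt (ε ^ 2 + t * R ^ 2) - Real.sqrt t * R) / (4 * ε) := by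
    field_simp
    ring
  rw [hgap]
  have hS := sqrt_mul_le_sqrt_sq_add_mul_sq (ε := ε) (t := t) hR
  exact div_nonneg (by linarith [Real.sqrt_nonneg (ε ^ 2 + t * R ^ 2)]) (by positivity)

/-- Comparison principle: if `−ε²Δη + tη ≤ 0` in `B(0,R)` and `η ≤ 1` on `∂B(0,R)`, then
`η(x) ≤ e^{γ(|x|²−R²)}` with `γ = (−ε+√(ε²+tR²))/(2R²ε)`; in particular
`η(0) ≤ exp(−(−ε+√(ε²+tR²))/(2ε)) ≤ C e^{−√t R/(4ε)}` for an absolute constant `C`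
when `ε ≤ R`. -/
theorem comparison_exponential_decay (ε t R : ℝ) (hε : 0 < ε) (ht : 0 < t) (hR : 0 < R)
    (η : ℂ → ℝ) (hreg : ContDiffOn ℝ 2 η (closedBall 0 R))
    (hsub : ∀ x ∈ ball (0 : ℂ) R, -ε ^ 2 * lapR η x + t * η x ≤ 0)
    (hbdry : ∀ x ∈ sphere (0 : ℂ) R, η x ≤ 1) :
    (∀ x ∈ ball (0 : ℂ) R,
        η x ≤ Real.exp ((-ε + Real.sqrt (ε ^ 2 + t * R ^ 2)) / (2 * R ^ 2 * ε)
          * (‖x‖ ^ 2 - R ^ 2))) ∧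
    η 0 ≤ Real.exp (-((-ε + Real.sqrt (ε ^ 2 + t * R ^ 2)) / (2 * ε))) ∧
    (ε ≤ R →
      η 0 ≤ Real.exp (1 / 2) * Real.exp (-(Real.sqrt t * R) / (4 * ε))) := by
  have hle : ∀ x ∈ closedBall (0 : ℂ) R, η x ≤ barrier (decayRate ε t R) R x := by
    refine le_of_subsolution_of_supersolution (sq_nonneg ε) ht hreg
      (contDiff_barrier _ _).contDiffOn (fun x hx => ?_)
      (fun x hx => (barrier_of_norm_eq (mem_sphere_zero_iff_norm.1 hx)).symm ▸ hbdry x hx)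
    have hw := mul_lapR_barrier_le (sq_nonneg ε) (decayRate_nonneg hε ht.le)
      (mem_ball_zero_iff.1 hx).le (four_mul_sq_mul_decayRate hε ht.le hR.ne').le
    linarith [hsub x hx]
  have hzero : η 0 ≤ Real.exp (-((-ε + Real.sqrt (ε ^ 2 + t * R ^ 2)) / (2 * ε))) := by
    have h0 := hle 0 (mem_closedBall_self hR.le)
    rwa [barrier, norm_zero, zero_pow two_ne_zero, zero_sub, mul_neg,
      decayRate_mul_sq hR.ne'] at h0
  exact ⟨fun x hx => hle x (ball_subset_closedBall hx), hzero,
    fun _ => hzero.trans (exp_neg_div_le_exp_half_mul hε hR.le)⟩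
end

section
/- Let (x_1, ..., x_N) be N points in ℝ² (N fixed) depending on a parameter ε → 0. Then along a subsequence there exist a subset J' ⊂ {1,...,N} and a constant λ ≥ 1 independent of ε such that |x_i − x_j| ≥ 8λ ε^{1/4} for all distinct i, j ∈ J', and ∪_{i=1}^N B(x_i, ε^{1/4}) ⊂ ∪_{i ∈ J'} B(x_i, λ ε^{1/4}). -/
open Filter Metric

/-- Greedy clustering: from any finite family of centers and radius `r > 0`, one can
select a subfamily that is `8·9^k`-separated (at scale `r`) whose enlarged balls of
radius `9^k r` cover all original balls of radius `r`. -/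
lemma key_sep {N : ℕ} (x : Fin N → ℂ) :
    ∀ (J : Finset (Fin N)) (r : ℝ), 0 < r →
      ∃ (J' : Finset (Fin N)) (k : ℕ), J' ⊆ J ∧ k + J'.card ≤ J.card ∧
        (∀ i ∈ J', ∀ j ∈ J', i ≠ j → 8 * 9 ^ k * r ≤ ‖x i - x j‖) ∧
        (⋃ i ∈ J, ball (x i) r) ⊆ ⋃ i ∈ J', ball (x i) (9 ^ k * r) := by
  intro J
  induction J using Finset.strongInduction with
  | _ J ih =>
    intro r hr
    by_cases hsep : ∀ i ∈ J, ∀ j ∈ J, i ≠ j → 8 * r ≤ ‖x i - x j‖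
    · exact ⟨J, 0, le_refl _, by simp, by simpa using hsep, by simp⟩
    · push_neg at hsep
      obtain ⟨i, hi, j, hj, hij, hlt⟩ := hsep
      have hJ' : J.erase j ⊂ J := Finset.erase_ssubset hj
      obtain ⟨J', k, hsub, hcard, hsep', hcov'⟩ := ih _ hJ' (9 * r) (by linarith)
      refine ⟨J', k + 1, hsub.trans (Finset.erase_subset _ _), ?_, ?_, ?_⟩
      · have h1 := Finset.card_erase_of_mem hj
        have h2 : 1 ≤ J.card := Finset.card_pos.mpr ⟨j, hj⟩
        omega
      · intro a ha b hb hab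
        have h := hsep' a ha b hb hab
        calc 8 * 9 ^ (k + 1) * r = 8 * 9 ^ k * (9 * r) := by ring
        _ ≤ _ := h
      · intro y hy
        simp only [Set.mem_iUnion, exists_prop] at hy
        obtain ⟨l, hl, hyl⟩ := hy
        have hstep : y ∈ ⋃ m ∈ J.erase j, ball (x m) (9 * r) := by
          by_cases hlj : l = j
          · subst hlj
            refine Set.mem_biUnion (Finset.mem_erase.mpr ⟨hij, hi⟩) ?_
            have h1 : dist y (x l) < r := mem_ball.mp hyl
            have h2 : dist (x l) (x i) < 8 * r := by
              rw [dist_eq_norm]; rwa [norm_sub_rev]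
            have : dist y (x i) < 9 * r :=
              calc dist y (x i) ≤ dist y (x l) + dist (x l) (x i) := dist_triangle _ _ _
              _ < r + 8 * r := by linarith
              _ = 9 * r := by ring
            exact mem_ball.mpr this
          · exact Set.mem_biUnion (Finset.mem_erase.mpr ⟨hlj, hl⟩)
              (ball_subset_ball (by linarith) hyl)
        have h := hcov' hstep
        simp only [Set.mem_iUnion, exists_prop] at h ⊢
        obtain ⟨m, hm, hym⟩ := h
        have heq : (9 : ℝ) ^ (k + 1) * r = 9 ^ k * (9 * r) := by ring
        exact ⟨m, hm, by rwa [heq]⟩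

/-- Separation of bad discs (Bethuel–Brezis–Hélein type clustering): given `N` points
`x_i(ε_n)` and `ε_n → 0`, along a subsequence there are `J' ⊆ {1,…,N}` and `λ ≥ 1`
(independent of `n`) such that the selected points are `8λ ε^{1/4}`-separated and the
union of all discs of radius `ε^{1/4}` is contained in the union of the selected discs of
radius `λ ε^{1/4}`. -/
theorem separated_bad_discs (N : ℕ) (εseq : ℕ → ℝ) (hpos : ∀ n, 0 < εseq n)
    (hlim : Tendsto εseq atTop (nhds 0)) (x : ℕ → Fin N → ℂ) :
    ∃ (φ : ℕ → ℕ) (_ : StrictMono φ) (J' : Finset (Fin N)) (lam : ℝ), 1 ≤ lam ∧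
      ∀ n : ℕ,
        (∀ i ∈ J', ∀ j ∈ J', i ≠ j →
          8 * lam * (εseq (φ n)) ^ ((1 : ℝ) / 4) ≤ ‖x (φ n) i - x (φ n) j‖) ∧
        (⋃ i : Fin N, ball (x (φ n) i) ((εseq (φ n)) ^ ((1 : ℝ) / 4)))
          ⊆ ⋃ i ∈ J', ball (x (φ n) i) (lam * (εseq (φ n)) ^ ((1 : ℝ) / 4)) := by
  set r : ℕ → ℝ := fun n => (εseq n) ^ ((1 : ℝ) / 4) with hr
  have hrpos : ∀ n, 0 < r n := fun n => Real.rpow_pos_of_pos (hpos n) _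
  have H : ∀ n, ∃ p : Finset (Fin N) × Fin (N + 1),
      (∀ i ∈ p.1, ∀ j ∈ p.1, i ≠ j →
        8 * 9 ^ (p.2 : ℕ) * r n ≤ ‖x n i - x n j‖) ∧
      (⋃ i : Fin N, ball (x n i) (r n))
        ⊆ ⋃ i ∈ p.1, ball (x n i) (9 ^ (p.2 : ℕ) * r n) := by
    intro n
    obtain ⟨J', k, hsub, hcard, hsep, hcov⟩ :=
      key_sep (x n) Finset.univ (r n) (hrpos n)
    have hk : k ≤ N := by
      have := Finset.card_le_univ J'
      simp only [Finset.card_univ, Fintype.card_fin] at hcard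
      omega
    refine ⟨⟨J', ⟨k, Nat.lt_succ_of_le hk⟩⟩, hsep, ?_⟩
    intro y hy
    apply hcov
    simp only [Set.mem_iUnion, exists_prop] at hy ⊢
    obtain ⟨l, hyl⟩ := hy
    exact ⟨l, Finset.mem_univ l, hyl⟩
  choose f hf using H
  obtain ⟨p, hp⟩ := Finite.exists_infinite_fiber f
  have hS : (f ⁻¹' {p}).Infinite := Set.infinite_coe_iff.mp hp
  refine ⟨Nat.nth (f ⁻¹' {p}), Nat.nth_strictMono hS, p.1, 9 ^ (p.2 : ℕ),
    one_le_pow₀ (by norm_num), ?_⟩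
  intro n
  have hmem : Nat.nth (f ⁻¹' {p}) n ∈ f ⁻¹' {p} := Nat.nth_mem_of_infinite hS n
  have hfe : f (Nat.nth (f ⁻¹' {p}) n) = p := hmem
  have := hf (Nat.nth (f ⁻¹' {p}) n)
  rw [hfe] at this
  exact this
end
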